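/- In LR-Subtraction Nim with a finite removable set S ⊆ ℤ≥2, the number of consecutive N-positions in the outcome sequence {O_S(n)} is at most max(S) - 1, and the positions immediately before and after a maximal run of N-positions are L-positions. -/
import Mathlib


open scoped Classical

inductive Outcome : Type
  | L | R | N | P
deriving DecidableEq

/-- Outcome determined from the set of outcomes of the options of a non-terminal position. -/
noncomputable def fromOptions (T : Set Outcome) : Outcome :=
  if Outcome.L ∈ T ∧ T ⊆ {Outcome.L, Outcome.N} then Outcome.L
  else if Outcome.R ∈ T ∧ T ⊆ {Outcome.R, Outcome.N} then Outcome.R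
  else if T = {Outcome.N} then Outcome.P
  else Outcome.N

/-- Outcome of Ending Partizan Subtraction Nim with removable set `S ⊆ ℤ≥2` and
terminal assignment `W`. -/
noncomputable def epOutcome (S : Set ℕ) (hS : ∀ s ∈ S, 2 ≤ s) (W : ℕ → Outcome) : ℕ → Outcome :=
  fun n => Nat.strongRecOn n (fun n ih =>
    if ∃ s ∈ S, s ≤ n then
      fromOptions {o | ∃ s, ∃ hs : s ∈ S, ∃ hsn : s ≤ n,
        o = ih (n - s) (by have := hS s hs; omega)}
    else W n)

/-- Outcome of `LR`-Subtraction Nim: at a terminal position, Left wins if the number of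
remaining tokens is even, Right wins if it is odd. -/
noncomputable def lrOutcome (S : Set ℕ) (hS : ∀ s ∈ S, 2 ≤ s) : ℕ → Outcome :=
  epOutcome S hS (fun n => if Even n then Outcome.L else Outcome.R)

lemma epOutcome_def (S : Set ℕ) (hS : ∀ s ∈ S, 2 ≤ s) (W : ℕ → Outcome) (n : ℕ) :
    epOutcome S hS W n = if ∃ s ∈ S, s ≤ n then
      fromOptions {o | ∃ s, ∃ _ : s ∈ S, ∃ _ : s ≤ n, o = epOutcome S hS W (n - s)}
    else W n := by
  conv_lhs => rw [epOutcome, Nat.strongRecOn_eq]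
  rfl

section Aux
variable (S : Set ℕ) (hS : ∀ s ∈ S, 2 ≤ s)

/-- the set of outcomes of options of `n` -/
def opts (n : ℕ) : Set Outcome :=
  {o | ∃ s, s ∈ S ∧ s ≤ n ∧ o = lrOutcome S hS (n - s)}

lemma lr_def (n : ℕ) : lrOutcome S hS n =
    if ∃ s ∈ S, s ≤ n then fromOptions (opts S hS n)
    else (if Even n then Outcome.L else Outcome.R) := by
  have h := epOutcome_def S hS (fun n => if Even n then Outcome.L else Outcome.R) n
  have hset : {o | ∃ s, ∃ _ : s ∈ S, ∃ _ : s ≤ n,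
      o = epOutcome S hS (fun n => if Even n then Outcome.L else Outcome.R) (n - s)}
      = opts S hS n := by
    ext o; simp [opts, lrOutcome]
    tauto
  rw [lrOutcome]; rw [h, hset]

lemma lr_nonterminal {n : ℕ} (h : ∃ s ∈ S, s ≤ n) :
    lrOutcome S hS n = fromOptions (opts S hS n) := by
  rw [lr_def, if_pos h]

lemma lr_terminal {n : ℕ} (h : ¬ ∃ s ∈ S, s ≤ n) :
    lrOutcome S hS n = if Even n then Outcome.L else Outcome.R := by
  rw [lr_def, if_neg h]

lemma lr_zero : lrOutcome S hS 0 = Outcome.L := by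
  rw [lr_terminal]
  · simp
  · rintro ⟨s, hs, hle⟩; have := hS s hs; omega

lemma mem_opts {n : ℕ} {o : Outcome} :
    o ∈ opts S hS n ↔ ∃ s, s ∈ S ∧ s ≤ n ∧ o = lrOutcome S hS (n - s) := Iff.rfl

end Aux

lemma fromOptions_of_L {T : Set Outcome} (h1 : Outcome.L ∈ T)
    (h2 : T ⊆ {Outcome.L, Outcome.N}) : fromOptions T = Outcome.L := by
  rw [fromOptions, if_pos ⟨h1, h2⟩]

lemma fromOptions_of_singleton_N {T : Set Outcome} (h : T = {Outcome.N}) :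
    fromOptions T = Outcome.P := by
  subst h
  rw [fromOptions]
  rw [if_neg, if_neg, if_pos rfl]
  · rintro ⟨h1, -⟩; simp at h1
  · rintro ⟨h1, -⟩; simp at h1

lemma fromOptions_eq_L {T : Set Outcome} (h : fromOptions T = Outcome.L) :
    Outcome.L ∈ T ∧ T ⊆ {Outcome.L, Outcome.N} := by
  rw [fromOptions] at h
  split_ifs at h with h1 h2 h3 <;>
    first | exact h1 | exact h2 | exact h3 | exact absurd h (by simp)

lemma fromOptions_eq_R {T : Set Outcome} (h : fromOptions T = Outcome.R) :
    Outcome.R ∈ T ∧ T ⊆ {Outcome.R, Outcome.N} := by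
  rw [fromOptions] at h
  split_ifs at h with h1 h2 h3 <;>
    first | exact h1 | exact h2 | exact h3 | exact absurd h (by simp)

lemma fromOptions_eq_P {T : Set Outcome} (h : fromOptions T = Outcome.P) :
    T = {Outcome.N} := by
  rw [fromOptions] at h
  split_ifs at h with h1 h2 h3 <;>
    first | exact h1 | exact h2 | exact h3 | exact absurd h (by simp)

def Allowed (a b : Outcome) : Prop :=
  a = Outcome.L ∨ b = Outcome.L ∨ (a = b ∧ a ≠ Outcome.R)

/-- The key invariant: adjacent outcomes form an allowed pair. -/
lemma lr_allowed (S : Set ℕ) (hS : ∀ s ∈ S, 2 ≤ s) :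
    ∀ m : ℕ, Allowed (lrOutcome S hS m) (lrOutcome S hS (m + 1)) := by
  intro m
  induction m using Nat.strong_induction_on with
  | _ m ih =>
  by_cases hm1 : ∃ s ∈ S, s ≤ m + 1
  · by_cases hm : ∃ s ∈ S, s ≤ m
    · -- both nonterminal
      obtain ⟨s0, hs0S, hs0m⟩ := hm
      -- the pair invariant transported to options
      have pair : ∀ s, s ∈ S → s ≤ m →
          Allowed (lrOutcome S hS (m - s)) (lrOutcome S hS (m + 1 - s)) := by
        intro s hs hsm
        have h2 := hS s hs
        have e : m + 1 - s = (m - s) + 1 := by omega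
        rw [e]
        exact ih (m - s) (by omega)
      have hAeq := lr_nonterminal S hS ⟨s0, hs0S, hs0m⟩
      have hBeq := lr_nonterminal S hS hm1
      -- membership of options of m+1
      have optB : ∀ o ∈ opts S hS (m + 1),
          o = Outcome.L ∨ ∃ s, s ∈ S ∧ s ≤ m ∧ o = lrOutcome S hS (m + 1 - s) := by
        rintro o ⟨s, hs, hle, rfl⟩
        rcases Nat.lt_or_ge m s with hlt | hge
        · have : s = m + 1 := by omega
          subst this
          left
          simpa using lr_zero S hS
        · right; exact ⟨s, hs, hge, rfl⟩
      cases hA : lrOutcome S hS m with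
      | L => exact Or.inl rfl
      | R =>
        -- show O (m+1) = L
        right; left
        rw [hAeq] at hA
        obtain ⟨hRmem, hsub⟩ := fromOptions_eq_R hA
        rw [hBeq]
        apply fromOptions_of_L
        · obtain ⟨s, hs, hsm, hR⟩ := hRmem
          have hp := pair s hs hsm
          rw [← hR] at hp
          have : lrOutcome S hS (m + 1 - s) = Outcome.L := by
            rcases hp with h | h | ⟨h, hne⟩
            · exact absurd h (by simp)
            · exact h
            · exact absurd rfl hne
          exact ⟨s, hs, by omega, this.symm⟩
        · intro o ho
          rcases optB o ho with h | ⟨s, hs, hsm, rfl⟩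
          · simp [h]
          · have hmem : lrOutcome S hS (m - s) ∈ opts S hS m := ⟨s, hs, hsm, rfl⟩
            have hin := hsub hmem
            have hp := pair s hs hsm
            rcases hin with h | h
            · -- option of m is R, so its successor is L
              rw [h] at hp
              rcases hp with h' | h' | ⟨h', hne⟩
              · exact absurd h' (by simp)
              · simp [h']
              · exact absurd rfl hne
            · rw [Set.mem_singleton_iff] at h
              rw [h] at hp
              rcases hp with h' | h' | ⟨h', -⟩
              · exact absurd h' (by simp)
              · simp [h']
              · simp [← h']
      | N =>
        -- show O (m+1) ∈ {L, N}
        cases hB : lrOutcome S hS (m + 1) with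
        | L => exact Or.inr (Or.inl rfl)
        | N => exact Or.inr (Or.inr ⟨rfl, by simp⟩)
        | R =>
          exfalso
          rw [hBeq] at hB
          obtain ⟨hRmem, hsub⟩ := fromOptions_eq_R hB
          -- then O m = L, contradiction
          have hsubA : opts S hS m ⊆ {Outcome.L, Outcome.N} := by
            rintro o ⟨s, hs, hsm, rfl⟩
            have hmem : lrOutcome S hS (m + 1 - s) ∈ opts S hS (m + 1) :=
              ⟨s, hs, by omega, rfl⟩
            have hin := hsub hmem
            have hp := pair s hs hsm
            rcases hin with h | h
            · rw [h] at hp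
              rcases hp with h' | h' | ⟨h', hne⟩
              · simp [h']
              · exact absurd h' (by simp)
              · rw [h'] at hne; exact absurd rfl hne
            · rw [Set.mem_singleton_iff] at h
              rw [h] at hp
              rcases hp with h' | h' | ⟨h', -⟩
              · simp [h']
              · exact absurd h' (by simp)
              · simp [h']
          have hLmem : Outcome.L ∈ opts S hS m := by
            obtain ⟨s, hs, hsm1, hR⟩ := hRmem
            have hsm : s ≤ m := by
              by_contra hc
              have : s = m + 1 := by omega
              subst this
              rw [Nat.sub_self, lr_zero S hS] at hR
              exact absurd hR.symm (by simp)
            have hp := pair s hs hsm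
            rw [← hR] at hp
            have : lrOutcome S hS (m - s) = Outcome.L := by
              rcases hp with h' | h' | ⟨h', hne⟩
              · exact h'
              · exact absurd h' (by simp)
              · rw [h'] at hne; exact absurd rfl hne
            exact ⟨s, hs, hsm, this.symm⟩
          rw [hAeq, fromOptions_of_L hLmem hsubA] at hA
          exact absurd hA (by simp)
        | P =>
          exfalso
          rw [hBeq] at hB
          have hTN := fromOptions_eq_P hB
          have hsubA : opts S hS m ⊆ {Outcome.L, Outcome.N} := by
            rintro o ⟨s, hs, hsm, rfl⟩
            have hmem : lrOutcome S hS (m + 1 - s) ∈ opts S hS (m + 1) :=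
              ⟨s, hs, by omega, rfl⟩
            rw [hTN, Set.mem_singleton_iff] at hmem
            have hp := pair s hs hsm
            rw [hmem] at hp
            rcases hp with h' | h' | ⟨h', -⟩
            · simp [h']
            · exact absurd h' (by simp)
            · simp [h']
          by_cases hL : Outcome.L ∈ opts S hS m
          · rw [hAeq, fromOptions_of_L hL hsubA] at hA
            exact absurd hA (by simp)
          · have : opts S hS m = {Outcome.N} := by
              apply Set.eq_singleton_iff_nonempty_unique_mem.mpr
              constructor
              · exact ⟨_, ⟨s0, hs0S, hs0m, rfl⟩⟩
              · intro o ho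
                rcases hsubA ho with h | h
                · rw [h] at ho; exact absurd ho hL
                · exact h
            rw [hAeq, fromOptions_of_singleton_N this] at hA
            exact absurd hA (by simp)
      | P =>
        -- O (m+1) ∈ {L, P}
        rw [hAeq] at hA
        have hTN := fromOptions_eq_P hA
        have hsubB : opts S hS (m + 1) ⊆ {Outcome.L, Outcome.N} := by
          intro o ho
          rcases optB o ho with h | ⟨s, hs, hsm, rfl⟩
          · simp [h]
          · have hmem : lrOutcome S hS (m - s) ∈ opts S hS m := ⟨s, hs, hsm, rfl⟩
            rw [hTN, Set.mem_singleton_iff] at hmem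
            have hp := pair s hs hsm
            rw [hmem] at hp
            rcases hp with h' | h' | ⟨h', -⟩
            · exact absurd h' (by simp)
            · simp [h']
            · simp [← h']
        by_cases hL : Outcome.L ∈ opts S hS (m + 1)
        · right; left
          rw [hBeq]
          exact fromOptions_of_L hL hsubB
        · right; right
          constructor
          · obtain ⟨s1, hs1S, hs1m⟩ := hm1
            have : opts S hS (m + 1) = {Outcome.N} := by
              apply Set.eq_singleton_iff_nonempty_unique_mem.mpr
              refine ⟨⟨_, ⟨s1, hs1S, hs1m, rfl⟩⟩, ?_⟩
              intro o ho
              rcases hsubB ho with h | h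
              · rw [h] at ho; exact absurd ho hL
              · exact h
            rw [hBeq, fromOptions_of_singleton_N this]
          · simp
    · -- m terminal, m+1 nonterminal : O (m+1) = L
      right; left
      rw [lr_nonterminal S hS hm1]
      obtain ⟨s1, hs1S, hs1m⟩ := hm1
      have hkey : ∀ o ∈ opts S hS (m + 1), o = Outcome.L := by
        rintro o ⟨s, hs, hle, rfl⟩
        have hgt : ¬ s ≤ m := fun h => hm ⟨s, hs, h⟩
        have : s = m + 1 := by omega
        subst this
        rw [Nat.sub_self]
        exact (lr_zero S hS)
      have hs1 : s1 = m + 1 := by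
        have : ¬ s1 ≤ m := fun h => hm ⟨s1, hs1S, h⟩
        omega
      apply fromOptions_of_L
      · refine ⟨s1, hs1S, hs1m, ?_⟩
        subst hs1
        rw [Nat.sub_self]
        exact (lr_zero S hS).symm
      · intro o ho; simp [hkey o ho]
  · -- both terminal
    have hm : ¬ ∃ s ∈ S, s ≤ m := by
      rintro ⟨s, hs, hle⟩; exact hm1 ⟨s, hs, by omega⟩
    rw [lr_terminal S hS hm, lr_terminal S hS hm1]
    rcases Nat.even_or_odd m with he | ho
    · left; rw [if_pos he]
    · right; left
      rw [if_pos]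
      simpa using ho.add_one

lemma allowed_N_left {a b : Outcome} (h : Allowed a b) (ha : a = Outcome.N) :
    b = Outcome.L ∨ b = Outcome.N := by
  subst ha
  rcases h with h | h | ⟨h, -⟩
  · exact absurd h (by simp)
  · exact Or.inl h
  · exact Or.inr h.symm

lemma allowed_N_right {a b : Outcome} (h : Allowed a b) (hb : b = Outcome.N) :
    a = Outcome.L ∨ a = Outcome.N := by
  subst hb
  rcases h with h | h | ⟨h, -⟩
  · exact Or.inl h
  · exact absurd h (by simp)
  · exact Or.inr h

theorem stmt6 (S : Set ℕ) (hS : ∀ s ∈ S, 2 ≤ s) (hfin : S.Finite)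
    (t : ℕ) (hmax : IsGreatest S t) :
    -- any run of consecutive `N`-positions has length at most `max S - 1`
    (∀ n k : ℕ, (∀ i < k, lrOutcome S hS (n + i) = Outcome.N) → k ≤ t - 1) ∧
    -- both sides of a maximal run of `N`-positions are `L`-positions
    (∀ n k : ℕ, 1 ≤ k →
      (∀ i < k, lrOutcome S hS (n + i) = Outcome.N) →
      lrOutcome S hS (n - 1) ≠ Outcome.N → lrOutcome S hS (n + k) ≠ Outcome.N →
      lrOutcome S hS (n - 1) = Outcome.L ∧ lrOutcome S hS (n + k) = Outcome.L) := by
  have htS : t ∈ S := hmax.1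
  have ht2 : 2 ≤ t := hS t htS
  constructor
  · intro n k hrun
    by_contra hc
    have hkt : t ≤ k := by omega
    -- O (n + t) = P
    have hP : lrOutcome S hS (n + t) = Outcome.P := by
      rw [lr_nonterminal S hS ⟨t, htS, by omega⟩]
      apply fromOptions_of_singleton_N
      apply Set.eq_singleton_iff_nonempty_unique_mem.mpr
      constructor
      · exact ⟨_, ⟨t, htS, by omega, rfl⟩⟩
      · rintro o ⟨s, hs, hle, rfl⟩
        have h2 := hS s hs
        have hst : s ≤ t := hmax.2 hs
        have he : n + t - s = n + (t - s) := by omega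
        rw [he]
        exact hrun (t - s) (by omega)
    have hall := lr_allowed S hS (n + (t - 1))
    rw [show n + (t - 1) + 1 = n + t from by omega] at hall
    have hN : lrOutcome S hS (n + (t - 1)) = Outcome.N := hrun (t - 1) (by omega)
    rcases allowed_N_left hall hN with h | h <;> rw [hP] at h <;> exact absurd h (by simp)
  · intro n k hk1 hrun hL hR
    constructor
    · rcases Nat.eq_zero_or_pos n with rfl | hn
      · have h0 := hrun 0 hk1
        rw [Nat.add_zero, lr_zero S hS] at h0
        exact absurd h0 (by simp)
      · have hall := lr_allowed S hS (n - 1)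
        rw [show n - 1 + 1 = n from by omega] at hall
        have hN : lrOutcome S hS n = Outcome.N := by
          have := hrun 0 hk1; rwa [Nat.add_zero] at this
        rcases allowed_N_right hall hN with h | h
        · exact h
        · exact absurd h hL
    · have hall := lr_allowed S hS (n + (k - 1))
      rw [show n + (k - 1) + 1 = n + k from by omega] at hall
      have hN : lrOutcome S hS (n + (k - 1)) = Outcome.N := hrun (k - 1) (by omega)
      rcases allowed_N_left hall hN with h | h
      · exact h
      · exact absurd h hR
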